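/- arXiv:2107.13737 — 6 statements merged into one kernel-verified Lean document; each statement's English description precedes it below -/
import Mathlib

section
/- For T = 2 and weight vector ξ = (ξ₁, ξ₂) with ξ₁ + ξ₂ = 1, ξᵢ ≥ 0, suppose Π is a probability distribution on {0,1}² supported exactly on the difference-in-differences set {(0,0), (0,1)} (both masses positive). Then Π satisfies the DATE equation if and only if ξ = (0, 1); moreover when ξ = (0,1), every such Π is a solution. -/
open Finset

/-- The indicator vector in `ℝ^T` of a binary assignment path `w ∈ {0,1}^T`. -/
noncomputable def vecOf (T : ℕ) (w : Fin T → Bool) : Fin T → ℝ :=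
  fun t => if w t then 1 else 0

/-- The centering matrix `J = I_T - (1/T)·1_T·1_T^⊤`. -/
noncomputable def Jmat (T : ℕ) : Matrix (Fin T) (Fin T) ℝ :=
  fun i j => (if i = j then (1 : ℝ) else 0) - 1 / (T : ℝ)

/-- The mean assignment vector `E_{W ~ Π}[W]`. -/
noncomputable def EW (T : ℕ) (P : (Fin T → Bool) → ℝ) : Fin T → ℝ :=
  fun t => ∑ w : Fin T → Bool, P w * vecOf T w t

/-- `J (W - E[W])` for a given path `w`. -/
noncomputable def Jc (T : ℕ) (P : (Fin T → Bool) → ℝ) (w : Fin T → Bool) : Fin T → ℝ :=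
  (Jmat T).mulVec (fun t => vecOf T w t - EW T P t)

/-- The DATE equation: `E_{W~Π}[(diag(W) - ξ W^⊤) J (W - E[W])] = 0` as a vector
equation in `ℝ^T`; the `j`-th row of `(diag(W) - ξ W^⊤) J (W - E[W])` is
`W_j (J(W-E[W]))_j - ξ_j · W^⊤ J (W - E[W])`. -/
noncomputable def DATEeq (T : ℕ) (P : (Fin T → Bool) → ℝ) (ξ : Fin T → ℝ) : Prop :=
  ∀ j : Fin T,
    ∑ w : Fin T → Bool,
      P w * (vecOf T w j * Jc T P w j
        - ξ j * ∑ i : Fin T, vecOf T w i * Jc T P w i) = 0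

lemma sum4 (f : (Fin 2 → Bool) → ℝ) :
    ∑ w, f w = f ![false,false] + f ![false,true] + f ![true,false] + f ![true,true] := by
  rw [show (Finset.univ : Finset (Fin 2 → Bool)) =
      {![false,false],![false,true],![true,false],![true,true]} from by decide,
    Finset.sum_insert (by decide), Finset.sum_insert (by decide),
    Finset.sum_insert (by decide), Finset.sum_singleton]
  ring

/-- Difference-in-differences design with `T = 2`: if `Π` is supported exactly on
`{(0,0),(0,1)}` (both masses positive), then `Π` satisfies the DATE equation with
weights `ξ` iff `ξ = (0, 1)`; in particular, when `ξ = (0,1)`, every such `Π`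
is a solution. -/
theorem stmt6 (P : (Fin 2 → Bool) → ℝ)
    (hpos : ∀ w, 0 ≤ P w) (hsum : ∑ w : Fin 2 → Bool, P w = 1)
    (h00 : 0 < P ![false, false]) (h01 : 0 < P ![false, true])
    (h11 : P ![true, true] = 0) (h10 : P ![true, false] = 0)
    (ξ : Fin 2 → ℝ) (hξpos : ∀ j, 0 ≤ ξ j) (hξsum : ξ 0 + ξ 1 = 1) :
    DATEeq 2 P ξ ↔ (ξ 0 = 0 ∧ ξ 1 = 1) := by
  rw [sum4] at hsum
  set a := P ![false,false] with ha
  set b := P ![false,true] with hb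
  have hab : a + b = 1 := by rw [h11, h10] at hsum; linarith
  have hEW0 : EW 2 P 0 = 0 := by
    simp only [EW, sum4, vecOf]
    rw [h11, h10]
    norm_num [Matrix.cons_val_zero]
  have hEW1 : EW 2 P 1 = b := by
    simp only [EW, sum4, vecOf]
    rw [h11, h10]
    norm_num [Matrix.cons_val_one, Matrix.head_cons]
    rfl
  have key : ∀ j, (∑ w : Fin 2 → Bool,
      P w * (vecOf 2 w j * Jc 2 P w j
        - ξ j * ∑ i : Fin 2, vecOf 2 w i * Jc 2 P w i)) =
      b * ((vecOf 2 ![false,true] j * Jc 2 P ![false,true] j)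
        - ξ j * (Jc 2 P ![false,true] 1)) := by
    intro j
    rw [sum4, h11, h10]
    have h0 : vecOf 2 ![false,false] = fun _ => 0 := by
      funext t; fin_cases t <;> simp [vecOf]
    have h1 : ∀ i : Fin 2, vecOf 2 ![false,true] i * Jc 2 P ![false,true] i
        = (if i = 1 then Jc 2 P ![false,true] 1 else 0) := by
      intro i; fin_cases i <;> simp [vecOf]
    simp only [Fin.sum_univ_two]
    rw [h1 0, h1 1]
    have hj0 : vecOf 2 ![false,false] j = 0 := by rw [h0]
    have hf0 : vecOf 2 ![false,false] 0 = 0 := by rw [h0]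
    have hf1 : vecOf 2 ![false,false] 1 = 0 := by rw [h0]
    rw [hj0, hf0, hf1]
    norm_num
    left; rfl
  have hJc1 : Jc 2 P ![false,true] 1 = a / 2 := by
    simp only [Jc, Jmat, Matrix.mulVec, dotProduct, Fin.sum_univ_two, hEW0, hEW1, vecOf]
    norm_num [Matrix.cons_val_zero, Matrix.cons_val_one, Matrix.head_cons]
    linarith
  have hJc0 : Jc 2 P ![false,true] 0 = -(a / 2) := by
    simp only [Jc, Jmat, Matrix.mulVec, dotProduct, Fin.sum_univ_two, hEW0, hEW1, vecOf]
    norm_num [Matrix.cons_val_zero, Matrix.cons_val_one, Matrix.head_cons]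
    linarith
  constructor
  · intro h
    have h0 := h 0
    rw [key 0] at h0
    have hv0 : vecOf 2 ![false,true] 0 = 0 := by simp [vecOf]
    rw [hv0, hJc1] at h0
    have hξ0 : ξ 0 = 0 := by
      have hba : 0 < b * (a / 2) := by positivity
      rcases mul_eq_zero.mp (by linarith : b * (ξ 0 * (a / 2)) = 0) with h' | h'
      · exact absurd h' (ne_of_gt h01)
      · rcases mul_eq_zero.mp h' with h'' | h''
        · exact h''
        · linarith
    exact ⟨hξ0, by linarith⟩
  · rintro ⟨hξ0, hξ1⟩ j
    rw [key j]
    have hjc : j = 0 ∨ j = 1 := by omega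
    rcases hjc with rfl | rfl
    · have hv0 : vecOf 2 ![false,true] 0 = 0 := by simp [vecOf]
      rw [hv0, hξ0]; ring
    · have hv1 : vecOf 2 ![false,true] 1 = 1 := by simp [vecOf]
      rw [hv1, hξ1]; ring
end

section
/- In the staggered adoption setting, for each 1 ≤ j ≤ T-1, the components of the DATE bias with equal weights satisfy h_{(j+1)1}(Π) - h_{j1}(Π) = Π(w_{(T-j)})·[j/T - Π(w_{(T-j)}) - 2·E_{W~Π}[W_j] + E_{W~Π}[1_T^⊤W]/T], where h_{j1}(Π) = E_{W~Π}[W_j] - (E_{W~Π}[W_j])² + E_{W~Π}[W_j]·E_{W~Π}[1_T^⊤W]/T - E_{W~Π}[W_j·(1_T^⊤W)]/T. -/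
open Finset

/-- The staggered-adoption assignment `w_{(j)} ∈ {0,1}^T`: the last `j` entries are
`1` and the first `T - j` entries are `0`. -/
def stag (T j : ℕ) : Fin T → Bool := fun t => decide (T - j ≤ (t : ℕ))


lemma vecOf_stag (T k : ℕ) (t : Fin T) :
    vecOf T (stag T k) t = if T - k ≤ (t : ℕ) then 1 else 0 := by
  simp [vecOf, stag]

lemma sum_vecOf_stag (T k : ℕ) (hk : k ≤ T) :
    ∑ t : Fin T, vecOf T (stag T k) t = (k : ℝ) := by
  simp only [vecOf_stag]
  rw [Fin.sum_univ_eq_sum_range (fun i => if T - k ≤ i then (1:ℝ) else 0)]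
  rw [Finset.range_eq_Ico, ← Finset.sum_Ico_consecutive _ (Nat.zero_le (T-k)) (Nat.sub_le T k)]
  rw [Finset.sum_ite_of_false (by intro i hi; simp at hi; omega),
      Finset.sum_ite_of_true (by intro i hi; simp at hi; omega)]
  simp [Nat.sub_sub_self hk]

/-- Staggered adoption: for `1 ≤ j ≤ T - 1`, the components of the DATE bias with
equal weights satisfy
`h_{(j+1)1}(Π) - h_{j1}(Π) = Π(w_{(T-j)})·[j/T - Π(w_{(T-j)}) - 2 E[W_j] + E[1^⊤W]/T]`,
where `h_{j1}(Π) = E[W_j] - E[W_j]² + E[W_j]·E[1^⊤W]/T - E[W_j·(1^⊤W)]/T`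
(coordinates are 1-based: `W_j` is the coordinate of index `j - 1`). -/
theorem stmt8 (T : ℕ) (hT : 2 ≤ T) (P : (Fin T → Bool) → ℝ)
    (hpos : ∀ w, 0 ≤ P w) (hsum : ∑ w : Fin T → Bool, P w = 1)
    (hsupp : ∀ w, P w ≠ 0 → ∃ j ≤ T, w = stag T j)
    (j : ℕ) (hj1 : 1 ≤ j) (hjT : j < T) :
    let Ef : ((Fin T → Bool) → ℝ) → ℝ := fun f => ∑ w : Fin T → Bool, P w * f w
    let c1 : Fin T := ⟨j - 1, by omega⟩
    let c2 : Fin T := ⟨j, hjT⟩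
    let Wc : Fin T → (Fin T → Bool) → ℝ := fun c w => vecOf T w c
    let sumW : (Fin T → Bool) → ℝ := fun w => ∑ t : Fin T, vecOf T w t
    let h1 : Fin T → ℝ := fun c =>
      Ef (Wc c) - (Ef (Wc c)) ^ 2 + Ef (Wc c) * Ef sumW / (T : ℝ)
        - Ef (fun w => Wc c w * sumW w) / (T : ℝ)
    h1 c2 - h1 c1
      = P (stag T (T - j)) *
          ((j : ℝ) / (T : ℝ) - P (stag T (T - j)) - 2 * Ef (Wc c1)
            + Ef sumW / (T : ℝ)) := by
  intro Ef c1 c2 Wc sumW h1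
  have hT0 : (T : ℝ) ≠ 0 := by positivity
  set q := stag T (T - j) with hq
  have hdiff : ∀ w, P w ≠ 0 →
      vecOf T w c2 - vecOf T w c1 = if w = q then 1 else 0 := by
    intro w hw
    by_cases hwq : w = q
    · subst hwq
      simp only [hq, vecOf_stag, if_pos rfl]
      have h2 : T - (T - j) ≤ (c2 : ℕ) := by simp only [c2]; omega
      have h1' : ¬ T - (T - j) ≤ (c1 : ℕ) := by simp only [c1]; omega
      rw [if_pos h2, if_neg h1']; norm_num
    · obtain ⟨k, hk, rfl⟩ := hsupp w hw
      rw [if_neg hwq]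
      have hkne : k ≠ T - j := by
        intro h; exact hwq (by rw [h, hq])
      simp only [vecOf_stag]
      have : (T - k ≤ (c2 : ℕ)) ↔ (T - k ≤ (c1 : ℕ)) := by
        simp only [c1, c2]; omega
      by_cases h : T - k ≤ (c2 : ℕ)
      · rw [if_pos h, if_pos (this.mp h)]; ring
      · rw [if_neg h, if_neg (fun h' => h (this.mpr h'))]; ring
  have hsumq : sumW q = (T : ℝ) - (j : ℝ) := by
    simp only [sumW, hq]
    rw [sum_vecOf_stag T (T - j) (Nat.sub_le T j)]
    push_cast [Nat.cast_sub hjT.le]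
    ring
  have e1 : Ef (Wc c2) = Ef (Wc c1) + P q := by
    have h : Ef (Wc c2) - Ef (Wc c1) = P q := by
      simp only [Ef, Wc, ← Finset.sum_sub_distrib, ← mul_sub]
      have hc : ∀ w ∈ Finset.univ, P w * (vecOf T w c2 - vecOf T w c1)
          = if w = q then P w else 0 := by
        intro w _
        by_cases hw : P w = 0
        · rw [hw]; by_cases hwq : w = q <;> simp [hwq]
        · rw [hdiff w hw]
          by_cases hwq : w = q <;> simp [hwq]
      rw [Finset.sum_congr rfl hc, Finset.sum_ite_eq' Finset.univ q P]
      simp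
    linarith
  have e2 : Ef (fun w => Wc c2 w * sumW w)
      = Ef (fun w => Wc c1 w * sumW w) + P q * ((T : ℝ) - (j : ℝ)) := by
    have h : Ef (fun w => Wc c2 w * sumW w) - Ef (fun w => Wc c1 w * sumW w)
        = P q * ((T : ℝ) - (j : ℝ)) := by
      simp only [Ef, Wc, ← Finset.sum_sub_distrib, ← mul_sub]
      have : ∀ w ∈ Finset.univ, P w * (vecOf T w c2 * sumW w - vecOf T w c1 * sumW w)
          = if w = q then P w * ((T : ℝ) - (j : ℝ)) else 0 := by
        intro w _
        by_cases hw : P w = 0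
        · rw [hw]; by_cases hwq : w = q <;> simp [hwq]
        · rw [show vecOf T w c2 * sumW w - vecOf T w c1 * sumW w
              = (vecOf T w c2 - vecOf T w c1) * sumW w by ring, hdiff w hw]
          by_cases hwq : w = q
          · rw [if_pos hwq, if_pos hwq, hwq, hsumq]; ring
          · rw [if_neg hwq, if_neg hwq]; ring
      rw [Finset.sum_congr rfl this, Finset.sum_ite_eq' Finset.univ q
        (fun w => P w * ((T : ℝ) - (j : ℝ)))]
      simp
    linarith
  simp only [h1, e1, e2]
  field_simp
  ring
end

section
/- The midpoint distribution Π on the full staggered adoption set defined by Π(w_{(T)}) = Π(w_{(0)}) = (T+1)/(4T) and Π(w_{(j)}) = 1/(2T) for j = 1,...,T-1 is a probability distribution and solves the DATE equation with equal weights ξ = 1_T/T, for every T ≥ 2. -/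
open Finset

/-- The probability distribution on `{0,1}^T` supported on the staggered-adoption
set `{w_{(0)}, …, w_{(T)}}` with mass `m j` on `w_{(j)}`. -/
noncomputable def stagDist (T : ℕ) (m : ℕ → ℝ) : (Fin T → Bool) → ℝ :=
  fun w => ∑ j ∈ Finset.range (T + 1), if w = stag T j then m j else 0

/-- Midpoint masses: `(T+1)/(4T)` on `w_{(0)}` and `w_{(T)}`, and `1/(2T)` on
`w_{(j)}` for `j = 1, …, T-1`. -/
noncomputable def mMid (T : ℕ) : ℕ → ℝ := fun j =>
  if j = 0 ∨ j = T then ((T : ℝ) + 1) / (4 * (T : ℝ)) else 1 / (2 * (T : ℝ))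

/-! ### Auxiliary lemmas -/

lemma sumId (n : ℕ) : ∑ i ∈ range n, (i:ℝ) = n*((n:ℝ)-1)/2 := by
  induction n with
  | zero => simp
  | succ k ih => rw [Finset.sum_range_succ, ih]; push_cast; ring

lemma sumSq (n : ℕ) : ∑ i ∈ range n, (i:ℝ)^2 = n*((n:ℝ)-1)*(2*n-1)/6 := by
  induction n with
  | zero => simp
  | succ k ih => rw [Finset.sum_range_succ, ih]; push_cast; ring

lemma sumIcoId {a b : ℕ} (h : a ≤ b) :
    ∑ i ∈ Ico a b, (i:ℝ) = (b*((b:ℝ)-1) - a*((a:ℝ)-1))/2 := by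
  rw [Finset.sum_Ico_eq_sub _ h, sumId, sumId]; ring

lemma sumIcoSq {a b : ℕ} (h : a ≤ b) :
    ∑ i ∈ Ico a b, (i:ℝ)^2 = (b*((b:ℝ)-1)*(2*b-1) - a*((a:ℝ)-1)*(2*a-1))/6 := by
  rw [Finset.sum_Ico_eq_sub _ h, sumSq, sumSq]; ring

lemma mMid_mid {T j : ℕ} (h1 : 1 ≤ j) (h2 : j < T) : mMid T j = 1 / (2*(T:ℝ)) := by
  unfold mMid; rw [if_neg]; omega

lemma mMid_zero (T : ℕ) : mMid T 0 = ((T:ℝ)+1)/(4*T) := by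
  unfold mMid; rw [if_pos (Or.inl rfl)]

lemma mMid_top (T : ℕ) : mMid T T = ((T:ℝ)+1)/(4*T) := by
  unfold mMid; rw [if_pos (Or.inr rfl)]

lemma sum_reduce (T : ℕ) (m : ℕ → ℝ) (F : (Fin T → Bool) → ℝ) :
    ∑ w : Fin T → Bool, stagDist T m w * F w
      = ∑ j ∈ range (T+1), m j * F (stag T j) := by
  unfold stagDist
  simp only [Finset.sum_mul, ite_mul, zero_mul]
  rw [Finset.sum_comm]
  refine Finset.sum_congr rfl fun j _ => ?_
  simp [Finset.sum_ite_eq']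

lemma sum_ite_split (a n : ℕ) (h : a ≤ n) (f : ℕ → ℝ) :
    ∑ j ∈ range n, (if a ≤ j then f j else 0) = ∑ j ∈ Ico a n, f j := by
  rw [range_eq_Ico, ← Finset.sum_Ico_consecutive _ (Nat.zero_le a) h]
  have h1 : ∑ j ∈ Ico 0 a, (if a ≤ j then f j else 0) = 0 :=
    Finset.sum_eq_zero fun j hj => if_neg (by simp at hj; omega)
  have h2 : ∑ j ∈ Ico a n, (if a ≤ j then f j else 0) = ∑ j ∈ Ico a n, f j :=
    Finset.sum_congr rfl fun j hj => if_pos (by simp at hj; omega)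
  rw [h1, h2, zero_add]

lemma EW_eq (T : ℕ) (hT : 1 ≤ T) (t : Fin T) :
    EW T (stagDist T (mMid T)) t = ((T:ℝ)+1+2*(t:ℕ))/(4*T) := by
  have ht : (t:ℕ) < T := t.isLt
  unfold EW
  rw [sum_reduce]
  have : ∀ j ∈ range (T+1), mMid T j * vecOf T (stag T j) t
      = (if T - (t:ℕ) ≤ j then mMid T j else 0) := by
    intro j _
    simp only [vecOf, stag, decide_eq_true_eq, mul_ite, mul_one, mul_zero]
    congr 1
    simp only [eq_iff_iff]
    omega
  rw [Finset.sum_congr rfl this, sum_ite_split _ _ (by omega)]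
  rw [Finset.sum_Ico_succ_top (by omega)]
  have hmid : ∑ j ∈ Ico (T - (t:ℕ)) T, mMid T j
      = ∑ j ∈ Ico (T - (t:ℕ)) T, 1/(2*(T:ℝ)) :=
    Finset.sum_congr rfl fun j hj => by
      simp only [Finset.mem_Ico] at hj; exact mMid_mid (by omega) hj.2
  rw [hmid, Finset.sum_const, Nat.card_Ico, Nat.sub_sub_self (le_of_lt ht)]
  have hT0 : (T:ℝ) ≠ 0 := by positivity
  rw [mMid_top, nsmul_eq_mul]
  field_simp
  ring

lemma Jc_eq (T : ℕ) (hT : 1 ≤ T) (P : (Fin T → Bool) → ℝ)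
    (hEW : ∀ t : Fin T, EW T P t = ((T:ℝ)+1+2*(t:ℕ))/(4*T))
    (j : ℕ) (hj : j ≤ T) (i : Fin T) :
    Jc T P (stag T j) i
      = (if T - j ≤ (i:ℕ) then (1:ℝ) else 0) - ((T:ℝ)+1+2*(i:ℕ))/(4*T) + 1/2 - j/T := by
  have hT0 : (T:ℝ) ≠ 0 := by positivity
  have hvec : ∀ k : Fin T, vecOf T (stag T j) k = (if T - j ≤ (k:ℕ) then (1:ℝ) else 0) := by
    intro k; simp [vecOf, stag]
  have hsumvec : ∑ k : Fin T, vecOf T (stag T j) k = (j:ℝ) := by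
    simp only [hvec]
    rw [Fin.sum_univ_eq_sum_range (fun k => if T - j ≤ k then (1:ℝ) else 0),
      sum_ite_split _ _ (by omega), Finset.sum_const,
      Nat.card_Ico, Nat.sub_sub_self hj, nsmul_eq_mul, mul_one]
  have hsumEW : ∑ k : Fin T, EW T P k = (T:ℝ)/2 := by
    simp only [hEW]
    rw [Fin.sum_univ_eq_sum_range (fun k => ((T:ℝ)+1+2*k)/(4*T)) T]
    rw [← Finset.sum_div]
    have : ∑ k ∈ range T, ((T:ℝ)+1+2*(k:ℕ)) = T*((T:ℝ)+1) + 2*(T*((T:ℝ)-1)/2) := by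
      rw [Finset.sum_add_distrib, Finset.sum_const, ← Finset.mul_sum, sumId, card_range,
        nsmul_eq_mul]
    rw [this]; field_simp; ring
  unfold Jc
  simp only [Matrix.mulVec, dotProduct]
  have expand : ∀ k : Fin T, Jmat T i k * (vecOf T (stag T j) k - EW T P k)
      = (if i = k then (vecOf T (stag T j) k - EW T P k) else 0)
        - (1/T) * (vecOf T (stag T j) k - EW T P k) := by
    intro k
    unfold Jmat
    rw [sub_mul, ite_mul, one_mul, zero_mul]
  rw [Finset.sum_congr rfl (fun k _ => expand k), Finset.sum_sub_distrib,
    Finset.sum_ite_eq, ← Finset.mul_sum, Finset.sum_sub_distrib, hsumvec, hsumEW]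
  simp only [Finset.mem_univ, if_pos, hvec i, hEW i]
  field_simp
  ring

lemma inner_eq (T : ℕ) (hT : 1 ≤ T) (P : (Fin T → Bool) → ℝ)
    (hEW : ∀ t : Fin T, EW T P t = ((T:ℝ)+1+2*(t:ℕ))/(4*T))
    (j : ℕ) (hj : j ≤ T) :
    ∑ i : Fin T, vecOf T (stag T j) i * Jc T P (stag T j) i
      = 3*(j:ℝ)*((T:ℝ)-j)/(4*T) := by
  have hT0 : (T:ℝ) ≠ 0 := by positivity
  have step1 : ∀ i : Fin T, vecOf T (stag T j) i * Jc T P (stag T j) i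
      = (if T - j ≤ (i:ℕ) then
          (1 - ((T:ℝ)+1+2*(i:ℕ))/(4*T) + 1/2 - (j:ℝ)/T) else 0) := by
    intro i
    rw [Jc_eq T hT P hEW j hj i]
    simp only [vecOf, stag, decide_eq_true_eq]
    by_cases h : T - j ≤ (i:ℕ)
    · simp only [if_pos h]; ring
    · simp only [if_neg h]; ring
  simp only [step1]
  rw [Fin.sum_univ_eq_sum_range (fun i => if T - j ≤ i then
      (1 - ((T:ℝ)+1+2*i)/(4*T) + 1/2 - (j:ℝ)/T) else 0),
    sum_ite_split _ _ (by omega)]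
  have step2 : ∀ i ∈ Ico (T-j) T, (1 - ((T:ℝ)+1+2*(i:ℕ))/(4*T) + 1/2 - (j:ℝ)/T)
      = (3/2 - (j:ℝ)/T - ((T:ℝ)+1)/(4*T)) - (1/(2*T))*(i:ℝ) := by
    intro i _; field_simp; ring
  rw [Finset.sum_congr rfl step2, Finset.sum_sub_distrib, Finset.sum_const,
    ← Finset.mul_sum, sumIcoId (by omega : T - j ≤ T), Nat.card_Ico,
    Nat.sub_sub_self hj, nsmul_eq_mul]
  rw [Nat.cast_sub hj]
  field_simp
  ring

lemma coord_eq (T : ℕ) (hT : 2 ≤ T) (P : (Fin T → Bool) → ℝ)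
    (hEW : ∀ t : Fin T, EW T P t = ((T:ℝ)+1+2*(t:ℕ))/(4*T)) (r : Fin T) :
    ∑ j ∈ range (T+1), mMid T j *
      (vecOf T (stag T j) r * Jc T P (stag T j) r
        - (1/(T:ℝ)) * ∑ i : Fin T, vecOf T (stag T j) i * Jc T P (stag T j) i) = 0 := by
  have hT1 : 1 ≤ T := by omega
  have hT0 : (T:ℝ) ≠ 0 := by positivity
  have hr : (r:ℕ) < T := r.isLt
  set C : ℝ := 3/2 - ((T:ℝ)+1+2*(r:ℕ))/(4*T) with hC
  have step1 : ∀ j ∈ range (T+1), mMid T j *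
      (vecOf T (stag T j) r * Jc T P (stag T j) r
        - (1/(T:ℝ)) * ∑ i : Fin T, vecOf T (stag T j) i * Jc T P (stag T j) i)
      = (if T - (r:ℕ) ≤ j then mMid T j * (C - (j:ℝ)/T) else 0)
        - mMid T j * ((1/(T:ℝ)) * (3*(j:ℝ)*((T:ℝ)-j)/(4*T))) := by
    intro j hjm
    have hj : j ≤ T := by simp at hjm; omega
    rw [Jc_eq T hT1 P hEW j hj r, inner_eq T hT1 P hEW j hj]
    simp only [vecOf, stag, decide_eq_true_eq, hC]
    by_cases h : T - j ≤ (r:ℕ)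
    · simp only [if_pos h, if_pos (show T - (r:ℕ) ≤ j by omega)]; ring
    · simp only [if_neg h, if_neg (show ¬ T - (r:ℕ) ≤ j by omega)]; ring
  rw [Finset.sum_congr rfl step1, Finset.sum_sub_distrib]
  -- Sum A
  have sumA : ∑ j ∈ range (T+1), (if T - (r:ℕ) ≤ j then mMid T j * (C - (j:ℝ)/T) else 0)
      = ((T:ℝ)+1)/(4*T) * (C - 1)
        + ((1/(2*T))*C * (r:ℕ)
          - (1/(2*(T:ℝ)*T)) * ((T*((T:ℝ)-1) - (T-(r:ℕ))*(((T:ℝ)-(r:ℕ))-1))/2)) := by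
    rw [sum_ite_split _ _ (by omega), Finset.sum_Ico_succ_top (by omega : T - (r:ℕ) ≤ T),
      mMid_top]
    have hmid : ∀ j ∈ Ico (T - (r:ℕ)) T, mMid T j * (C - (j:ℝ)/T)
        = (1/(2*(T:ℝ)))*C - (1/(2*(T:ℝ)*T))*(j:ℝ) := by
      intro j hj
      simp only [Finset.mem_Ico] at hj
      rw [mMid_mid (by omega) hj.2]
      field_simp
    rw [Finset.sum_congr rfl hmid, Finset.sum_sub_distrib, Finset.sum_const,
      ← Finset.mul_sum, sumIcoId (by omega : T - (r:ℕ) ≤ T), Nat.card_Ico,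
      Nat.sub_sub_self (le_of_lt hr), nsmul_eq_mul, Nat.cast_sub (le_of_lt hr)]
    have : ((T:ℝ))/T = 1 := div_self hT0
    rw [this]
    ring
  -- Sum B
  have sumB : ∑ j ∈ range (T+1), mMid T j * ((1/(T:ℝ)) * (3*(j:ℝ)*((T:ℝ)-j)/(4*T)))
      = (3/(8*(T:ℝ)^2)) * ((T*((T:ℝ)-1) - 0)/2)
        - (3/(8*(T:ℝ)^3)) * ((T*((T:ℝ)-1)*(2*T-1) - 0)/6) := by
    rw [Finset.sum_range_succ]
    have hTop : mMid T T * ((1/(T:ℝ)) * (3*(T:ℝ)*((T:ℝ)-T)/(4*T))) = 0 := by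
      rw [sub_self]; ring
    rw [hTop, add_zero, range_eq_Ico, Finset.sum_eq_sum_Ico_succ_bot (by omega : 0 < T)]
    have hBot : mMid T 0 * ((1/(T:ℝ)) * (3*((0:ℕ):ℝ)*((T:ℝ)-(0:ℕ))/(4*T))) = 0 := by
      push_cast; ring
    rw [hBot, zero_add]
    have hmid : ∀ j ∈ Ico 1 T, mMid T j * ((1/(T:ℝ)) * (3*(j:ℝ)*((T:ℝ)-j)/(4*T)))
        = (3/(8*(T:ℝ)^2))*(j:ℝ) - (3/(8*(T:ℝ)^3))*(j:ℝ)^2 := by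
      intro j hj
      simp only [Finset.mem_Ico] at hj
      rw [mMid_mid hj.1 hj.2]
      field_simp
      ring
    rw [Finset.sum_congr rfl hmid, Finset.sum_sub_distrib, ← Finset.mul_sum,
      ← Finset.mul_sum, sumIcoId (by omega : 1 ≤ T), sumIcoSq (by omega : 1 ≤ T)]
    push_cast
    ring
  rw [sumA, sumB]
  simp only [hC]
  field_simp
  ring

/-- For every `T ≥ 2`, the midpoint distribution on the full staggered adoption set
is a probability distribution and solves the DATE equation with equal weights. -/
theorem stmt11 (T : ℕ) (hT : 2 ≤ T) :
    (∀ w, 0 ≤ stagDist T (mMid T) w) ∧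
    (∑ w : Fin T → Bool, stagDist T (mMid T) w) = 1 ∧
    DATEeq T (stagDist T (mMid T)) (fun _ => 1 / (T : ℝ)) := by
  have hT0 : (T:ℝ) ≠ 0 := by positivity
  have hTpos : (0:ℝ) < T := by positivity
  refine ⟨?_, ?_, ?_⟩
  · intro w
    refine Finset.sum_nonneg fun j _ => ?_
    split
    · unfold mMid
      split <;> positivity
    · exact le_rfl
  · have : ∑ w : Fin T → Bool, stagDist T (mMid T) w
        = ∑ w : Fin T → Bool, stagDist T (mMid T) w * 1 := by simp
    rw [this, sum_reduce]
    simp only [mul_one]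
    rw [Finset.sum_range_succ, mMid_top, range_eq_Ico,
      Finset.sum_eq_sum_Ico_succ_bot (by omega : 0 < T), mMid_zero]
    have hmid : ∀ j ∈ Ico 1 T, mMid T j = 1/(2*(T:ℝ)) := by
      intro j hj
      simp only [Finset.mem_Ico] at hj
      exact mMid_mid hj.1 hj.2
    rw [Finset.sum_congr rfl hmid, Finset.sum_const, Nat.card_Ico, nsmul_eq_mul]
    have h1 : ((T - 1 : ℕ):ℝ) = (T:ℝ) - 1 := by
      rw [Nat.cast_sub (by omega)]; norm_num
    rw [h1]
    field_simp
    ring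
  · intro r
    rw [sum_reduce]
    exact coord_eq T hT _ (EW_eq T (by omega)) r
end

section
/- Consider the transient design with support S* = {w̃_{(0)}, w̃_{(1)}, ..., w̃_{(T)}} where w̃_{(0)} = 0_T and w̃_{(t)} = e_t (the t-th standard basis vector). A probability distribution Π on S* solves the DATE equation with weights ξ if and only if there exists b > 0 such that Π(w̃_{(t)})·(1 - Π(w̃_{(t)}) - Π(w̃_{(0)})/T) = ξ_t·b for all t = 1,...,T. -/
open Finset

/-- The never-treated assignment `0_T`. -/
def zeroW (T : ℕ) : Fin T → Bool := fun _ => false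

/-- The transient assignment `e_t` with only period `t` treated. -/
def eVec (T : ℕ) (t : Fin T) : Fin T → Bool := fun s => decide (s = t)

/-- Transient design with support `S* = {0_T, e_1, …, e_T}` (positive mass on each
element): `Π` solves the DATE equation with weights `ξ` iff there exists `b > 0`
with `Π(e_t)·(1 - Π(e_t) - Π(0_T)/T) = ξ_t·b` for all `t`. -/
theorem stmt14 (T : ℕ) (hT : 2 ≤ T) (P : (Fin T → Bool) → ℝ)
    (hpos : ∀ w, 0 ≤ P w) (hsum : ∑ w : Fin T → Bool, P w = 1)
    (hsupp : ∀ w, P w ≠ 0 → w = zeroW T ∨ ∃ t, w = eVec T t)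
    (hz : 0 < P (zeroW T)) (he : ∀ t, 0 < P (eVec T t))
    (ξ : Fin T → ℝ) (hξpos : ∀ t, 0 ≤ ξ t) (hξsum : ∑ t : Fin T, ξ t = 1) :
    DATEeq T P ξ ↔
      ∃ b : ℝ, 0 < b ∧
        ∀ t : Fin T,
          P (eVec T t) * (1 - P (eVec T t) - P (zeroW T) / (T : ℝ)) = ξ t * b := by

  have hT1 : (1:ℝ) ≤ (T:ℝ) := by exact_mod_cast (by omega : 1 ≤ T)
  have hinj : Function.Injective (eVec T) := by
    intro a b hab
    have h := congrFun hab a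
    simpa [eVec] using h
  have hzne : ∀ t, eVec T t ≠ zeroW T := by
    intro t h
    have := congrFun h t
    simp [eVec, zeroW] at this
  -- reduce sums over all paths to the support
  have hred : ∀ g : (Fin T → Bool) → ℝ,
      ∑ w : Fin T → Bool, P w * g w
        = P (zeroW T) * g (zeroW T) + ∑ t : Fin T, P (eVec T t) * g (eVec T t) := by
    intro g
    have hsub : ∑ w : Fin T → Bool, P w * g w
        = ∑ w ∈ insert (zeroW T) (Finset.image (eVec T) Finset.univ), P w * g w := by
      refine (Finset.sum_subset (Finset.subset_univ _) ?_).symm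
      intro w _ hw
      rcases eq_or_ne (P w) 0 with h | h
      · simp [h]
      · exfalso
        rcases hsupp w h with h0 | ⟨t, ht⟩
        · exact hw (by simp [h0])
        · exact hw (by
            subst ht
            exact Finset.mem_insert_of_mem (Finset.mem_image_of_mem _ (Finset.mem_univ t)))
    rw [hsub, Finset.sum_insert (by
      simp only [Finset.mem_image, Finset.mem_univ, true_and]
      rintro ⟨t, ht⟩
      exact hzne t ht), Finset.sum_image (fun a _ b _ h => hinj h)]
  have hvz : ∀ i, vecOf T (zeroW T) i = 0 := by intro i; simp [vecOf, zeroW]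
  have hve : ∀ t i, vecOf T (eVec T t) i = if i = t then 1 else 0 := by
    intro t i; simp [vecOf, eVec]
  have hEW : ∀ j, EW T P j = P (eVec T j) := by
    intro j
    rw [EW, hred fun w => vecOf T w j]
    simp [hvz, hve, mul_ite, Finset.sum_ite_eq']
  set S := ∑ t : Fin T, P (eVec T t) with hSdef
  have hsum' : P (zeroW T) + S = 1 := by
    have h := hred (fun _ => 1)
    simp only [mul_one, hsum] at h
    linarith
  have hsumEW : ∑ i : Fin T, EW T P i = S :=
    Finset.sum_congr rfl (fun i _ => hEW i)
  have hJc : ∀ w j, Jc T P w j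
      = (vecOf T w j - EW T P j) - (∑ i : Fin T, (vecOf T w i - EW T P i)) / (T:ℝ) := by
    intro w j
    have key : ∀ x : Fin T → ℝ,
        ∑ i : Fin T, ((if j = i then (1:ℝ) else 0) - 1 / (T:ℝ)) * x i
          = x j - (∑ i : Fin T, x i) / (T:ℝ) := by
      intro x
      rw [Finset.sum_congr rfl (fun i _ => sub_mul _ _ (x i)), Finset.sum_sub_distrib]
      congr 1
      · simp [ite_mul, Finset.sum_ite_eq]
      · rw [Finset.sum_congr rfl (fun i _ => one_div_mul_eq_div _ (x i)), Finset.sum_div]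
    simpa [Jc, Matrix.mulVec, dotProduct, Jmat] using
      key (fun i => vecOf T w i - EW T P i)
  have hsve : ∀ t, ∑ i : Fin T, vecOf T (eVec T t) i = 1 := by
    intro t; simp [hve]
  have hJce : ∀ t j, Jc T P (eVec T t) j
      = (if j = t then 1 else 0) - P (eVec T j) - P (zeroW T) / (T:ℝ) := by
    intro t j
    have hsumc : ∑ i : Fin T, (vecOf T (eVec T t) i - EW T P i) = P (zeroW T) := by
      rw [Finset.sum_sub_distrib, hsve, hsumEW]; linarith
    rw [hJc, hsumc, hve, hEW, sub_sub]
  set c := P (zeroW T) / (T:ℝ) with hcdef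
  set F : Fin T → ℝ := fun t => P (eVec T t) * (1 - P (eVec T t) - c) with hFdef
  set B := ∑ t : Fin T, F t with hBdef
  have hinner : ∀ t, ∑ i : Fin T, vecOf T (eVec T t) i * Jc T P (eVec T t) i
      = 1 - P (eVec T t) - c := by
    intro t
    have h1 : ∀ i, vecOf T (eVec T t) i * Jc T P (eVec T t) i
        = if i = t then Jc T P (eVec T t) t else 0 := by
      intro i
      rcases eq_or_ne i t with h | h
      · subst h; simp [hve]
      · simp [hve, h]
    rw [Finset.sum_congr rfl (fun i _ => h1 i), Finset.sum_ite_eq', hJce]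
    simp
  have hkey : ∀ j : Fin T,
      (∑ w : Fin T → Bool, P w * (vecOf T w j * Jc T P w j
        - ξ j * ∑ i : Fin T, vecOf T w i * Jc T P w i)) = F j - ξ j * B := by
    intro j
    rw [hred]
    have hz0 : vecOf T (zeroW T) j * Jc T P (zeroW T) j
        - ξ j * ∑ i : Fin T, vecOf T (zeroW T) i * Jc T P (zeroW T) i = 0 := by
      simp [hvz]
    rw [hz0, mul_zero, zero_add]
    have hterm : ∀ t, P (eVec T t) * (vecOf T (eVec T t) j * Jc T P (eVec T t) j
        - ξ j * ∑ i : Fin T, vecOf T (eVec T t) i * Jc T P (eVec T t) i)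
        = (if j = t then F j else 0) - ξ j * F t := by
      intro t
      rw [hinner, hve, hJce]
      rcases eq_or_ne j t with h | h
      · subst h; simp [hFdef]; ring
      · simp [h, hFdef]; ring
    rw [Finset.sum_congr rfl (fun t _ => hterm t), Finset.sum_sub_distrib,
      Finset.sum_ite_eq, ← Finset.mul_sum]
    simp [hBdef]
  have hFpos : ∀ t, 0 < F t := by
    intro t
    have hnt : ∃ s : Fin T, s ≠ t := by
      rcases eq_or_ne t ⟨0, by omega⟩ with h | h
      · exact ⟨⟨1, by omega⟩, by simp [h, Fin.ext_iff]⟩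
      · exact ⟨⟨0, by omega⟩, fun hc => h hc.symm⟩
    obtain ⟨s, hs⟩ := hnt
    have hlt : P (eVec T t) < S := by
      rw [hSdef]
      exact Finset.single_lt_sum hs (Finset.mem_univ t) (Finset.mem_univ s)
        (he s) (fun k _ _ => (he k).le)
    have hc : c ≤ P (zeroW T) := by
      rw [hcdef]; exact div_le_self hz.le hT1
    have h1 : 0 < 1 - P (eVec T t) - c := by linarith
    exact mul_pos (he t) h1
  have hBpos : 0 < B := by
    rw [hBdef]
    exact Finset.sum_pos (fun t _ => hFpos t) ⟨⟨0, by omega⟩, Finset.mem_univ _⟩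
  unfold DATEeq
  constructor
  · intro hD
    refine ⟨B, hBpos, fun t => ?_⟩
    have h := hD t
    rw [hkey t] at h
    have hFt : F t = ξ t * B := by linarith
    simpa only [hFdef] using hFt
  · rintro ⟨b, hb, hft⟩ j
    rw [hkey j]
    have hBb : B = b := by
      rw [hBdef]
      calc ∑ t : Fin T, F t = ∑ t : Fin T, ξ t * b :=
            Finset.sum_congr rfl (fun t _ => by simpa only [hFdef] using hft t)
        _ = b := by rw [← Finset.sum_mul, hξsum, one_mul]
    have hFj : F j = ξ j * b := by simpa only [hFdef] using hft j
    rw [hFj, hBb]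
    ring
end

section
/- For the transient design with at most one treated period and equal weights ξ_t = 1/T, the uniform distribution on the T+1 points {0_T, e_1, ..., e_T} solves the DATE equation; more generally, for any value p ∈ (0,1) assigned to 0_T, the distribution giving mass p to 0_T and mass (1-p)/T to each e_t solves the DATE equation. -/
open Finset

/-- The transient-design distribution giving mass `p` to `0_T` and mass `(1-p)/T`
to each `e_t`. -/
noncomputable def transDist (T : ℕ) (p : ℝ) : (Fin T → Bool) → ℝ :=
  fun w => (if w = zeroW T then p else 0)
    + ∑ t : Fin T, if w = eVec T t then (1 - p) / (T : ℝ) else 0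

lemma sum_key (T : ℕ) (p : ℝ) (g : (Fin T → Bool) → ℝ) :
    ∑ w : Fin T → Bool, transDist T p w * g w
      = p * g (zeroW T) + ((1 - p) / (T : ℝ)) * ∑ t : Fin T, g (eVec T t) := by
  simp only [transDist, add_mul, Finset.sum_add_distrib, Finset.sum_mul, ite_mul, zero_mul]
  congr 1
  · simp [Finset.sum_ite_eq']
  · rw [Finset.sum_comm]
    simp [Finset.sum_ite_eq', Finset.mul_sum]

lemma Jmat_mulVec (T : ℕ) (x : Fin T → ℝ) (j : Fin T) :
    (Jmat T).mulVec x j = x j - (1 / (T : ℝ)) * ∑ k, x k := by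
  simp [Jmat, Matrix.mulVec, dotProduct, sub_mul, Finset.sum_sub_distrib,
    ite_mul, Finset.sum_ite_eq, Finset.mul_sum]

lemma vecOf_zero (T : ℕ) (t : Fin T) : vecOf T (zeroW T) t = 0 := by
  simp [vecOf, zeroW]

lemma vecOf_e (T : ℕ) (s t : Fin T) : vecOf T (eVec T s) t = if t = s then 1 else 0 := by
  simp [vecOf, eVec]

lemma EW_eq_s15 (T : ℕ) (p : ℝ) (t : Fin T) :
    EW T (transDist T p) t = (1 - p) / (T : ℝ) := by
  rw [EW, sum_key]
  simp [vecOf_zero, vecOf_e, Finset.sum_ite_eq]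

lemma Jc_zero (T : ℕ) (hT : (T : ℝ) ≠ 0) (p : ℝ) (j : Fin T) :
    Jc T (transDist T p) (zeroW T) j = 0 := by
  have hc : Fintype.card (Fin T) = T := Fintype.card_fin T
  rw [Jc, Jmat_mulVec]
  simp only [vecOf_zero, EW_eq_s15 T p, Finset.sum_const, Finset.card_univ, hc, nsmul_eq_mul]
  field_simp
  ring

lemma Jc_e (T : ℕ) (hT : (T : ℝ) ≠ 0) (p : ℝ) (s j : Fin T) :
    Jc T (transDist T p) (eVec T s) j = (if j = s then 1 else 0) - 1 / (T : ℝ) := by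
  rw [Jc, Jmat_mulVec]
  simp only [vecOf_e, EW_eq_s15 T p, Finset.sum_sub_distrib, Finset.sum_ite_eq,
    Finset.mem_univ, if_true, Finset.sum_const, Finset.card_univ, Fintype.card_fin,
    nsmul_eq_mul]
  by_cases h : j = s <;> simp [h] <;> field_simp <;> ring

lemma DATE_main (T : ℕ) (hT : (T : ℝ) ≠ 0) (p : ℝ) (j : Fin T) :
    ∑ w : Fin T → Bool,
      transDist T p w * (vecOf T w j * Jc T (transDist T p) w j
        - (1 / (T : ℝ)) * ∑ i : Fin T, vecOf T w i * Jc T (transDist T p) w i) = 0 := by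
  rw [sum_key]
  simp only [vecOf_zero, vecOf_e, Jc_zero T hT p, Jc_e T hT p, zero_mul, mul_zero,
    Finset.sum_const_zero, sub_zero, add_zero, ite_mul, one_mul]
  have h1 : ∀ t : Fin T, (∑ i : Fin T, if i = t then (if i = t then (1:ℝ) else 0) - 1 / T else 0)
      = 1 - 1 / T := by
    intro t; rw [Finset.sum_ite_eq']; simp
  simp only [h1]
  rw [Finset.sum_sub_distrib]
  rw [Finset.sum_ite_eq]
  simp only [Finset.mem_univ, if_true, Finset.sum_const, Finset.card_univ, Fintype.card_fin,
    nsmul_eq_mul]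
  field_simp
  ring

lemma td_nonneg (T : ℕ) (p : ℝ) (h0 : 0 ≤ p) (h1 : p ≤ 1) (w : Fin T → Bool) :
    0 ≤ transDist T p w := by
  have hc : (0:ℝ) ≤ (1 - p) / T := div_nonneg (by linarith) (Nat.cast_nonneg T)
  unfold transDist
  refine add_nonneg (by split <;> simp [h0])
    (Finset.sum_nonneg fun t _ => by split <;> simp [hc])

lemma td_sum (T : ℕ) (hT : (T : ℝ) ≠ 0) (p : ℝ) :
    (∑ w : Fin T → Bool, transDist T p w) = 1 := by
  have h := sum_key T p (fun _ => 1)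
  simp only [mul_one] at h
  rw [h]
  simp only [Finset.sum_const, Finset.card_univ, Fintype.card_fin, nsmul_eq_mul, mul_one]
  field_simp
  ring

lemma key_all (T : ℕ) (hT : (T : ℝ) ≠ 0) (p : ℝ) (hp : 0 < p) (hp1 : p < 1) :
    (∀ w, 0 ≤ transDist T p w) ∧
      (∑ w : Fin T → Bool, transDist T p w) = 1 ∧
      DATEeq T (transDist T p) (fun _ => 1 / (T : ℝ)) :=
  ⟨td_nonneg T p hp.le hp1.le, td_sum T hT p, fun j => DATE_main T hT p j⟩

/-- For the transient design with at most one treated period and equal weights, the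
uniform distribution on the `T+1` points `{0_T, e_1, …, e_T}` solves the DATE
equation; more generally, for any `p ∈ (0,1)`, the distribution with mass `p` on
`0_T` and `(1-p)/T` on each `e_t` is a probability distribution solving the DATE
equation with equal weights. -/
theorem stmt15 (T : ℕ) (hT : 2 ≤ T) :
    ((∀ w, 0 ≤ transDist T (1 / ((T : ℝ) + 1)) w) ∧
      (∑ w : Fin T → Bool, transDist T (1 / ((T : ℝ) + 1)) w) = 1 ∧
      DATEeq T (transDist T (1 / ((T : ℝ) + 1))) (fun _ => 1 / (T : ℝ))) ∧
    ∀ p : ℝ, 0 < p → p < 1 →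
      (∀ w, 0 ≤ transDist T p w) ∧
      (∑ w : Fin T → Bool, transDist T p w) = 1 ∧
      DATEeq T (transDist T p) (fun _ => 1 / (T : ℝ)) := by
  have hT2 : (2:ℝ) ≤ (T : ℝ) := by exact_mod_cast hT
  have hT0 : (T : ℝ) ≠ 0 := by linarith
  constructor
  · exact key_all T hT0 (1 / ((T : ℝ) + 1)) (by positivity)
      ((div_lt_one (by linarith)).2 (by linarith))
  · exact fun p hp hp1 => key_all T hT0 p hp hp1
end

section
/- In the weighted two-way fixed effects regression with unit weights Θᵢ > 0, the estimator τ̂ minimizing Σᵢ Σₜ (Yᵢₜ - μ - αᵢ - λₜ - Wᵢₜτ)²·Θᵢ over (τ, μ, α, λ) with Σᵢαᵢ = Σₜλₜ = 0 equals N/D, where N = Γ_wy·Γ_θ - Γ_w^⊤Γ_y and D = Γ_ww·Γ_θ - Γ_w^⊤Γ_w, with Γ_θ = (1/n)ΣᵢΘᵢ, Γ_ww = (1/n)ΣᵢΘᵢWᵢ^⊤JWᵢ, Γ_wy = (1/n)ΣᵢΘᵢWᵢ^⊤JYᵢ, Γ_w = (1/n)ΣᵢΘᵢJWᵢ, Γ_y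 = (1/n)ΣᵢΘᵢJYᵢ, and J = I_T - (1/T)·1_T·1_T^⊤, provided D > 0. -/
open Finset

lemma lin_coef_zero (A B : ℝ) (H : ∀ s : ℝ, 0 ≤ A * s ^ 2 + B * s) : B = 0 := by
  have hA : 0 ≤ A := by have h1 := H 1; have h2 := H (-1); nlinarith
  have h21 : (0:ℝ) < 2 * A + 1 := by linarith
  have h := H (-(B / (2 * A + 1)))
  have heq : A * (-(B / (2 * A + 1))) ^ 2 + B * (-(B / (2 * A + 1)))
      = (A * B ^ 2 - B ^ 2 * (2 * A + 1)) / (2 * A + 1) ^ 2 := by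
    field_simp; ring
  rw [heq] at h
  have h2 : 0 ≤ A * B ^ 2 - B ^ 2 * (2 * A + 1) := by
    rcases div_nonneg_iff.mp h with ⟨h3, _⟩ | ⟨_, h4⟩
    · exact h3
    · nlinarith
  nlinarith [sq_nonneg B]

/-- The weighted two-way fixed-effects least-squares objective with unit
weights `Θ i`. -/
noncomputable def twfeLoss (n T : ℕ) (Y W : Fin n → Fin T → ℝ) (Θ : Fin n → ℝ)
    (τ μ : ℝ) (α : Fin n → ℝ) (lam : Fin T → ℝ) : ℝ :=
  ∑ i : Fin n, (∑ t : Fin T, (Y i t - μ - α i - lam t - W i t * τ) ^ 2) * Θ i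

/-- In the weighted TWFE regression with unit weights `Θ i > 0` and binary
assignments, any minimizer `(τ, μ, α, λ)` of the objective subject to
`∑ α = ∑ λ = 0` satisfies `τ = N / D`, where
`N = Γ_wy·Γ_θ - Γ_w^⊤ Γ_y` and `D = Γ_ww·Γ_θ - Γ_w^⊤ Γ_w`, provided `D > 0`. -/
theorem stmt19 (n T : ℕ) (hn : 1 ≤ n) (hT : 1 ≤ T)
    (Y W : Fin n → Fin T → ℝ)
    (hW : ∀ i t, W i t = 0 ∨ W i t = 1)
    (Θ : Fin n → ℝ) (hΘ : ∀ i, 0 < Θ i)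
    (Γθ Γww Γwy : ℝ) (Γw Γy : Fin T → ℝ)
    (hΓθ : Γθ = (1 / (n : ℝ)) * ∑ i : Fin n, Θ i)
    (hΓww : Γww = (1 / (n : ℝ)) *
      ∑ i : Fin n, Θ i * ∑ t : Fin T, W i t * (Jmat T).mulVec (W i) t)
    (hΓwy : Γwy = (1 / (n : ℝ)) *
      ∑ i : Fin n, Θ i * ∑ t : Fin T, W i t * (Jmat T).mulVec (Y i) t)
    (hΓw : ∀ t, Γw t = (1 / (n : ℝ)) * ∑ i : Fin n, Θ i * (Jmat T).mulVec (W i) t)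
    (hΓy : ∀ t, Γy t = (1 / (n : ℝ)) * ∑ i : Fin n, Θ i * (Jmat T).mulVec (Y i) t)
    (hD : 0 < Γww * Γθ - ∑ t : Fin T, Γw t * Γw t)
    (τ μ : ℝ) (α : Fin n → ℝ) (lam : Fin T → ℝ)
    (hα : ∑ i : Fin n, α i = 0) (hlam : ∑ t : Fin T, lam t = 0)
    (hmin : ∀ (τ' μ' : ℝ) (α' : Fin n → ℝ) (lam' : Fin T → ℝ),
      (∑ i : Fin n, α' i = 0) → (∑ t : Fin T, lam' t = 0) →
      twfeLoss n T Y W Θ τ μ α lam ≤ twfeLoss n T Y W Θ τ' μ' α' lam') :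
    τ = (Γwy * Γθ - ∑ t : Fin T, Γw t * Γy t)
          / (Γww * Γθ - ∑ t : Fin T, Γw t * Γw t) := by
  have hn0 : (n : ℝ) ≠ 0 := Nat.cast_ne_zero.mpr (by omega)
  have hT0 : (T : ℝ) ≠ 0 := Nat.cast_ne_zero.mpr (by omega)
  -- the residual function
  set R : Fin n → Fin T → ℝ := fun i t => Y i t - μ - α i - lam t - W i t * τ
    with hRdef
  -- `mulVec` by the centering matrix is centering
  have hJ : ∀ (v : Fin T → ℝ) (t : Fin T),
      (Jmat T).mulVec v t = v t - (∑ s, v s) / (T : ℝ) := by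
    intro v t
    simp only [Matrix.mulVec, dotProduct, Jmat]
    have h1 : ∀ x : Fin T, ((if t = x then (1:ℝ) else 0) - 1 / (T:ℝ)) * v x
        = (if t = x then v x else 0) - (1 / (T:ℝ)) * v x := by
      intro x; split_ifs <;> ring
    rw [Finset.sum_congr rfl fun x _ => h1 x, Finset.sum_sub_distrib,
      Finset.sum_ite_eq, ← Finset.mul_sum]
    simp only [Finset.mem_univ, if_true]
    ring
  -- first-order conditions
  have foc : ∀ (dτ dμ : ℝ) (dα : Fin n → ℝ) (dl : Fin T → ℝ),
      (∑ i, dα i = 0) → (∑ t, dl t = 0) →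
      ∑ i, (∑ t, (dμ + dα i + dl t + W i t * dτ) * R i t) * Θ i = 0 := by
    intro dτ dμ dα dl hdα hdl
    set D' : Fin n → Fin T → ℝ := fun i t => dμ + dα i + dl t + W i t * dτ
      with hD'
    have inner : ∀ (s : ℝ) (i : Fin n),
        ∑ t, (Y i t - (μ + s*dμ) - (α i + s*dα i) - (lam t + s*dl t)
            - W i t * (τ + s*dτ)) ^ 2
        = (∑ t, (Y i t - μ - α i - lam t - W i t * τ) ^ 2)
          + (∑ t, (D' i t) ^ 2) * s ^ 2
          + (∑ t, D' i t * R i t) * (-2 * s) := by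
      intro s i
      rw [Finset.sum_mul, Finset.sum_mul, ← Finset.sum_add_distrib,
        ← Finset.sum_add_distrib]
      refine Finset.sum_congr rfl fun t _ => ?_
      simp only [hD', hRdef]; ring
    have key : ∀ s : ℝ,
        twfeLoss n T Y W Θ (τ + s*dτ) (μ + s*dμ) (fun i => α i + s*dα i)
          (fun t => lam t + s*dl t)
        = twfeLoss n T Y W Θ τ μ α lam
          + (∑ i, ((∑ t, (D' i t) ^ 2) * Θ i)) * s ^ 2
          + (∑ i, (-2 * ((∑ t, D' i t * R i t) * Θ i))) * s := by
      intro s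
      simp only [twfeLoss]
      rw [Finset.sum_mul, Finset.sum_mul, ← Finset.sum_add_distrib,
        ← Finset.sum_add_distrib]
      refine Finset.sum_congr rfl fun i _ => ?_
      rw [inner s i]; ring
    have hquad : ∀ s : ℝ, 0 ≤ (∑ i, ((∑ t, (D' i t) ^ 2) * Θ i)) * s ^ 2
        + (∑ i, (-2 * ((∑ t, D' i t * R i t) * Θ i))) * s := by
      intro s
      have hfe1 : ∑ i, (α i + s * dα i) = 0 := by
        rw [Finset.sum_add_distrib, hα, ← Finset.mul_sum, hdα]; ring
      have hfe2 : ∑ t, (lam t + s * dl t) = 0 := by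
        rw [Finset.sum_add_distrib, hlam, ← Finset.mul_sum, hdl]; ring
      have h := hmin (τ + s*dτ) (μ + s*dμ) (fun i => α i + s*dα i)
        (fun t => lam t + s*dl t) hfe1 hfe2
      rw [key s] at h
      linarith
    have hB0 := lin_coef_zero _ _ hquad
    have hB2 : ∑ i, (-2 * ((∑ t, D' i t * R i t) * Θ i))
        = -2 * ∑ i, (∑ t, D' i t * R i t) * Θ i := by
      rw [Finset.mul_sum]
    rw [hB2] at hB0
    have := mul_eq_zero.mp hB0
    rcases this with h | h
    · norm_num at h
    · exact h
  -- E1 : ∑ᵢ Θᵢ ∑ₜ Wᵢₜ Rᵢₜ = 0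
  have E1 : ∑ i, (∑ t, W i t * R i t) * Θ i = 0 := by
    have h := foc 1 0 (fun _ => 0) (fun _ => 0) (by simp) (by simp)
    simpa using h
  -- E2 : ∑ᵢ Θᵢ ∑ₜ Rᵢₜ = 0
  have E2 : ∑ i, (∑ t, R i t) * Θ i = 0 := by
    have h := foc 0 1 (fun _ => 0) (fun _ => 0) (by simp) (by simp)
    simpa using h
  -- E3 : ∑ₜ Rᵢₜ = 0 for each i
  have E3 : ∀ j, ∑ t, R j t = 0 := by
    intro j
    have hsum : ∑ i : Fin n, ((if i = j then (1:ℝ) else 0) - 1/(n:ℝ)) = 0 := by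
      rw [Finset.sum_sub_distrib, Finset.sum_ite_eq', Finset.sum_const,
        Finset.card_univ, Fintype.card_fin]
      simp only [Finset.mem_univ, if_true, nsmul_eq_mul]
      field_simp
      ring
    have h := foc 0 0 (fun i => (if i = j then (1:ℝ) else 0) - 1/(n:ℝ))
      (fun _ => 0) hsum (by simp)
    simp only [zero_add, add_zero, mul_zero] at h
    have per : ∀ i, (∑ t, ((if i = j then (1:ℝ) else 0) - 1/(n:ℝ)) * R i t) * Θ i
        = (if i = j then (∑ t, R i t) * Θ i else 0)
          - (1/(n:ℝ)) * ((∑ t, R i t) * Θ i) := by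
      intro i; rw [← Finset.mul_sum]; split_ifs with hij <;> ring
    have key3 : ∑ i, (∑ t, ((if i = j then (1:ℝ) else 0) - 1/(n:ℝ)) * R i t) * Θ i
        = (∑ t, R j t) * Θ j - (1/(n:ℝ)) * ∑ i, (∑ t, R i t) * Θ i := by
      calc ∑ i, (∑ t, ((if i = j then (1:ℝ) else 0) - 1/(n:ℝ)) * R i t) * Θ i
          = ∑ i, ((if i = j then (∑ t, R i t) * Θ i else 0)
              - (1/(n:ℝ)) * ((∑ t, R i t) * Θ i)) :=
            Finset.sum_congr rfl fun i _ => per i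
        _ = _ := by
            rw [Finset.sum_sub_distrib, Finset.sum_ite_eq', ← Finset.mul_sum]
            simp only [Finset.mem_univ, if_true]
    rw [key3, E2, mul_zero, sub_zero] at h
    rcases mul_eq_zero.mp h with h | h
    · exact h
    · exact absurd h (ne_of_gt (hΘ j))
  -- E4 : ∑ᵢ Θᵢ Rᵢₜ = 0 for each t
  have E4 : ∀ j, ∑ i, R i j * Θ i = 0 := by
    intro j
    have hsum : ∑ t : Fin T, ((if t = j then (1:ℝ) else 0) - 1/(T:ℝ)) = 0 := by
      rw [Finset.sum_sub_distrib, Finset.sum_ite_eq', Finset.sum_const,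
        Finset.card_univ, Fintype.card_fin]
      simp only [Finset.mem_univ, if_true, nsmul_eq_mul]
      field_simp
      ring
    have h := foc 0 0 (fun _ => 0) (fun t => (if t = j then (1:ℝ) else 0) - 1/(T:ℝ))
      (by simp) hsum
    simp only [zero_add, add_zero, mul_zero] at h
    have per : ∀ i, (∑ t, ((if t = j then (1:ℝ) else 0) - 1/(T:ℝ)) * R i t) * Θ i
        = (R i j - (1/(T:ℝ)) * ∑ t, R i t) * Θ i := by
      intro i
      congr 1
      calc ∑ t, ((if t = j then (1:ℝ) else 0) - 1/(T:ℝ)) * R i t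
          = ∑ t, ((if t = j then R i t else 0) - (1/(T:ℝ)) * R i t) :=
            Finset.sum_congr rfl fun t _ => by split_ifs <;> ring
        _ = R i j - (1/(T:ℝ)) * ∑ t, R i t := by
            rw [Finset.sum_sub_distrib, Finset.sum_ite_eq', ← Finset.mul_sum]
            simp only [Finset.mem_univ, if_true]
    calc ∑ i, R i j * Θ i
        = ∑ i, (R i j - (1/(T:ℝ)) * ∑ t, R i t) * Θ i := by
          refine Finset.sum_congr rfl fun i _ => ?_
          rw [E3 i, mul_zero, sub_zero]
      _ = ∑ i, (∑ t, ((if t = j then (1:ℝ) else 0) - 1/(T:ℝ)) * R i t) * Θ i :=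
          (Finset.sum_congr rfl fun i _ => (per i)).symm
      _ = 0 := h
  -- within-unit means
  have E3' : ∀ i, (∑ t, Y i t) - (T:ℝ)*μ - (T:ℝ)*α i - τ*(∑ t, W i t) = 0 := by
    intro i
    have h := E3 i
    simp only [hRdef] at h
    simp only [Finset.sum_sub_distrib, hlam, ← Finset.sum_mul, Finset.sum_const,
      Finset.card_univ, Fintype.card_fin, nsmul_eq_mul] at h
    linear_combination h
  -- residual in centered form
  have hR : ∀ i t, R i t = (Y i t - (∑ s, Y i s) / (T:ℝ)) - lam t
      - τ * (W i t - (∑ s, W i s) / (T:ℝ)) := by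
    intro i t
    have h := E3' i
    have hme : μ + α i = ((∑ t, Y i t) - τ * ∑ t, W i t) / (T:ℝ) := by
      rw [eq_div_iff hT0]; linear_combination -h
    simp only [hRdef]
    linear_combination -hme
  -- time effects: Γθ · lam t = Γy t - τ · Γw t
  have h5 : ∀ t, Γθ * lam t = Γy t - τ * Γw t := by
    intro t
    have step : ∑ i, R i t * Θ i
        = (∑ i, Θ i * (Y i t - (∑ s, Y i s) / (T:ℝ)))
          - (∑ i, Θ i) * lam t
          - τ * (∑ i, Θ i * (W i t - (∑ s, W i s) / (T:ℝ))) := by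
      rw [Finset.sum_mul, Finset.mul_sum, ← Finset.sum_sub_distrib,
        ← Finset.sum_sub_distrib]
      refine Finset.sum_congr rfl fun i _ => ?_
      rw [hR i t]; ring
    have e2c : (∑ i, Θ i * (Y i t - (∑ s, Y i s) / (T:ℝ)))
        - (∑ i, Θ i) * lam t
        - τ * (∑ i, Θ i * (W i t - (∑ s, W i s) / (T:ℝ))) = 0 := by
      rw [← step]; exact E4 t
    rw [hΓθ, hΓy t, hΓw t]
    simp only [hJ]
    linear_combination (-1/(n:ℝ)) * e2c
  -- lam drops out against centered W
  have hWlam : ∀ i, ∑ t, W i t * lam t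
      = ∑ t, (W i t - (∑ s, W i s) / (T:ℝ)) * lam t := by
    intro i
    have h1 : ∑ t, (W i t - (∑ s, W i s) / (T:ℝ)) * lam t
        = (∑ t, W i t * lam t) - ((∑ s, W i s) / (T:ℝ)) * ∑ t, lam t := by
      rw [Finset.mul_sum, ← Finset.sum_sub_distrib]
      exact Finset.sum_congr rfl fun t _ => by ring
    rw [h1, hlam, mul_zero, sub_zero]
  -- main equation from E1
  have e1c : (∑ i, Θ i * ∑ t, W i t * (Y i t - (∑ s, Y i s) / (T:ℝ)))
      - (∑ t, lam t * ∑ i, Θ i * (W i t - (∑ s, W i s) / (T:ℝ)))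
      - τ * (∑ i, Θ i * ∑ t, W i t * (W i t - (∑ s, W i s) / (T:ℝ))) = 0 := by
    have step1 : ∀ i, (∑ t, W i t * R i t) * Θ i
        = Θ i * (∑ t, W i t * (Y i t - (∑ s, Y i s) / (T:ℝ)))
          - Θ i * (∑ t, (W i t - (∑ s, W i s) / (T:ℝ)) * lam t)
          - τ * (Θ i * ∑ t, W i t * (W i t - (∑ s, W i s) / (T:ℝ))) := by
      intro i
      have A1 : ∑ t, W i t * R i t
          = (∑ t, W i t * (Y i t - (∑ s, Y i s) / (T:ℝ)))
            - (∑ t, W i t * lam t)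
            - τ * ∑ t, W i t * (W i t - (∑ s, W i s) / (T:ℝ)) := by
        rw [Finset.mul_sum, ← Finset.sum_sub_distrib, ← Finset.sum_sub_distrib]
        refine Finset.sum_congr rfl fun t _ => ?_
        rw [hR i t]; ring
      rw [A1, hWlam i]; ring
    have step2 : ∑ i, (∑ t, W i t * R i t) * Θ i
        = (∑ i, Θ i * ∑ t, W i t * (Y i t - (∑ s, Y i s) / (T:ℝ)))
          - (∑ i, Θ i * ∑ t, (W i t - (∑ s, W i s) / (T:ℝ)) * lam t)
          - τ * ∑ i, Θ i * ∑ t, W i t * (W i t - (∑ s, W i s) / (T:ℝ)) := by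
      rw [Finset.mul_sum, ← Finset.sum_sub_distrib, ← Finset.sum_sub_distrib]
      exact Finset.sum_congr rfl fun i _ => step1 i
    have swap : ∑ i, Θ i * ∑ t, (W i t - (∑ s, W i s) / (T:ℝ)) * lam t
        = ∑ t, lam t * ∑ i, Θ i * (W i t - (∑ s, W i s) / (T:ℝ)) := by
      simp only [Finset.mul_sum]
      rw [Finset.sum_comm]
      exact Finset.sum_congr rfl fun t _ => Finset.sum_congr rfl fun i _ => by ring
    rw [← swap, ← step2]
    exact E1
  have hmidsum : ∑ t, lam t * Γw t
      = (1/(n:ℝ)) * ∑ t, lam t * ∑ i, Θ i * (W i t - (∑ s, W i s) / (T:ℝ)) := by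
    rw [Finset.mul_sum]
    refine Finset.sum_congr rfl fun t _ => ?_
    rw [hΓw t]
    simp only [hJ]
    ring
  have final : Γwy - (∑ t, lam t * Γw t) - τ * Γww = 0 := by
    rw [hΓwy, hΓww, hmidsum]
    simp only [hJ]
    linear_combination (1/(n:ℝ)) * e1c
  have hL : Γθ * (∑ t, lam t * Γw t)
      = (∑ t, Γw t * Γy t) - τ * ∑ t, Γw t * Γw t := by
    rw [Finset.mul_sum, Finset.mul_sum, ← Finset.sum_sub_distrib]
    refine Finset.sum_congr rfl fun t _ => ?_
    linear_combination Γw t * h5 t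
  have main : τ * (Γww * Γθ - ∑ t, Γw t * Γw t)
      = Γwy * Γθ - ∑ t, Γw t * Γy t := by
    linear_combination (-Γθ) * final - hL
  rw [eq_div_iff (ne_of_gt hD)]
  linear_combination main
end
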